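/- arXiv:math/0112307 — 4 statements merged into one kernel-verified Lean document; each statement's English description precedes it below -/
import Mathlib

section
/- Let F : C → D be a monoidal (or semigroupal) functor between semigroupal categories. Then postcomposition with F induces a cochain map ⌈F(−)⌉ : X^•(C) → X^•(F) from the deformation complex of C to the deformation complex of F, commuting with the coboundary maps. -/
open CategoryTheory MonoidalCategory CategoryTheory.Functor.LaxMonoidal

universe v₁ v₂ u₁ u₂

namespace DeformationComplex

variable {C : Type u₁} [Category.{v₁} C] [MonoidalCategory C]
  {D : Type u₂} [Category.{v₂} D] [MonoidalCategory D]

/-- Right-parenthesized iterated tensor product `⊗ⁿ` of a list of objects. -/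
def tPow : List C → C
  | [] => 𝟙_ C
  | a :: l => a ⊗ tPow l

variable (F : C ⥤ D) [F.LaxMonoidal]

/-- The functor `⊗ⁿ ∘ Fⁿ` on objects: `F(A₁) ⊗ (F(A₂) ⊗ ⋯)`. -/
def tF : List C → D
  | [] => 𝟙_ D
  | a :: l => F.obj a ⊗ tF l

/-- Lists of morphisms between pointwise matching lists of objects. -/
inductive HomList : List C → List C → Type (max u₁ v₁)
  | nil : HomList [] []
  | cons {a b : C} {l m : List C} (f : a ⟶ b) (fs : HomList l m) : HomList (a :: l) (b :: m)

/-- Action of `⊗ⁿ` on a list of morphisms. -/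
def tPowMap : ∀ {A B : List C}, HomList A B → (tPow A ⟶ tPow B)
  | _, _, .nil => 𝟙 (𝟙_ C)
  | _, _, .cons f fs => f ⊗ₘ tPowMap fs

/-- Action of `⊗ⁿ ∘ Fⁿ` on a list of morphisms. -/
def tFMap : ∀ {A B : List C}, HomList A B → (tF F A ⟶ tF F B)
  | _, _, .nil => 𝟙 (𝟙_ D)
  | _, _, .cons f fs => F.map f ⊗ₘ tFMap fs

/-- A (not yet graded) cochain for the deformation complex of `F`: a family of morphisms
`F(A₁) ⊗ ⋯ ⊗ F(Aₙ) ⟶ F(A₁ ⊗ ⋯ ⊗ Aₙ)` indexed by lists of objects of `C`.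
The degree-`n` cochain group `Xⁿ(F) = Nat(⊗ⁿ(Fⁿ), F(⊗ⁿ))` consists of the values on lists
of length `n` of such families that are natural (see `Natural`). -/
abbrev Fam : Type _ := ∀ A : List C, tF F A ⟶ F.obj (tPow A)

/-- Naturality: a `Fam` is a natural transformation `⊗ⁿ(Fⁿ) ⟶ F(⊗ⁿ)` in each degree. -/
def Natural (φ : Fam F) : Prop :=
  ∀ {A B : List C} (fs : HomList A B), tFMap F fs ≫ φ B = φ A ≫ F.map (tPowMap fs)

/-- The list obtained by tensoring the entries in positions `i, i+1`. -/
def mergeAt : List C → ℕ → List C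
  | a :: b :: l, 0 => (a ⊗ b) :: l
  | a :: b :: l, i + 1 => a :: mergeAt (b :: l) i
  | [], _ => []
  | [a], _ => [a]

/-- The padding morphism `tF A ⟶ tF (mergeAt A i)` given by a prolongation of the structure
map `F̃` (and an associator). -/
def mergeHom : ∀ (A : List C) (i : ℕ), tF F A ⟶ tF F (mergeAt A i)
  | a :: b :: l, 0 => (α_ (F.obj a) (F.obj b) (tF F l)).inv ≫ (μ F a b ▷ tF F l)
  | a :: b :: l, i + 1 => F.obj a ◁ mergeHom (b :: l) i
  | [], _ => 𝟙 _
  | [a], _ => 𝟙 _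

/-- The corresponding coherence morphism `tPow (mergeAt A i) ⟶ tPow A` in `C`. -/
def mergePad : ∀ (A : List C) (i : ℕ), tPow (mergeAt A i) ⟶ tPow A
  | a :: b :: l, 0 => (α_ a b (tPow l)).hom
  | a :: b :: l, i + 1 => a ◁ mergePad (b :: l) i
  | [], _ => 𝟙 _
  | [a], _ => 𝟙 _

/-- Splitting isomorphism `tF (A ++ [a]) ≅ tF A ⊗ F a`. -/
def splitF : ∀ (A : List C) (a : C), tF F (A ++ [a]) ≅ tF F A ⊗ F.obj a
  | [], a => (ρ_ (F.obj a)) ≪≫ (λ_ (F.obj a)).symm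
  | b :: A, a => whiskerLeftIso (F.obj b) (splitF A a) ≪≫ (α_ _ _ _).symm

/-- Splitting isomorphism `tPow (A ++ [a]) ≅ tPow A ⊗ a` in `C`. -/
def splitC : ∀ (A : List C) (a : C), (tPow (A ++ [a]) : C) ≅ tPow A ⊗ a
  | [], a => (ρ_ a) ≪≫ (λ_ a).symm
  | b :: A, a => whiskerLeftIso b (splitC A a) ≪≫ (α_ _ _ _).symm

variable [Preadditive D]

/-- The last face `⌈φ_{A₀,…,A_{n-1}} ⊗ F(Aₙ)⌉` of the deformation coboundary, padded by
structure maps (associators, unitors and `F̃`). -/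
def lastFace (φ : Fam F) (A : List C) (h : A ≠ []) : tF F A ⟶ F.obj (tPow A) :=
  eqToHom (congrArg (tF F) (List.dropLast_append_getLast h).symm)
    ≫ (splitF F A.dropLast (A.getLast h)).hom
    ≫ (φ A.dropLast ▷ F.obj (A.getLast h))
    ≫ μ F (tPow A.dropLast) (A.getLast h)
    ≫ F.map ((splitC A.dropLast (A.getLast h)).inv)
    ≫ F.map (eqToHom (congrArg tPow (List.dropLast_append_getLast h)))

/-- The deformation coboundary
`(δφ)_{A₀,…,Aₙ} = ⌈F(A₀) ⊗ φ_{A₁,…,Aₙ}⌉ + Σᵢ (−1)ⁱ ⌈φ_{…,A_{i-1} ⊗ A_i,…}⌉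
  + (−1)ⁿ⁺¹ ⌈φ_{A₀,…,A_{n-1}} ⊗ F(Aₙ)⌉`. -/
def firstFace (φ : Fam F) (a : C) (l : List C) : tF F (a :: l) ⟶ F.obj (tPow (a :: l)) :=
  (F.obj a ◁ φ l) ≫ μ F a (tPow l)

/-- The `i`-th inner face `⌈φ_{A₀,…,A_{i-1} ⊗ A_i,…,Aₙ}⌉`, padded by `F̃` and associators. -/
def innerFace (φ : Fam F) (A : List C) (i : ℕ) : tF F A ⟶ F.obj (tPow A) :=
  mergeHom F A i ≫ φ (mergeAt A i) ≫ F.map (mergePad A i)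

/-- The deformation coboundary
`(δφ)_{A₀,…,Aₙ} = ⌈F(A₀) ⊗ φ_{A₁,…,Aₙ}⌉ + Σᵢ (−1)ⁱ ⌈φ_{…,A_{i-1} ⊗ A_i,…}⌉
  + (−1)ⁿ⁺¹ ⌈φ_{A₀,…,A_{n-1}} ⊗ F(Aₙ)⌉`. -/
def d (φ : Fam F) : Fam F := fun A =>
  match A with
  | [] => 0
  | a :: l =>
      firstFace F φ a l
      + (∑ i ∈ Finset.range l.length,
          ((-1 : ℤ) ^ (i + 1)) • innerFace F φ (a :: l) i)
      + ((-1 : ℤ) ^ (l.length + 1)) • lastFace F φ (a :: l) (by simp)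

end DeformationComplex

/-!
`X^•(C) = X^•(Id_C)` is realized as the deformation complex of the identity functor `𝟭 C`
with its (identity) lax monoidal structure, and the padding is by prolongations of the
structure maps `F̃`, `F₀`.
-/

namespace DeformationComplex

open CategoryTheory MonoidalCategory CategoryTheory.Functor.LaxMonoidal

variable {C : Type u₁} [Category.{v₁} C] [MonoidalCategory C]
  {D : Type u₂} [Category.{v₂} D] [MonoidalCategory D]
  (F : C ⥤ D) [F.LaxMonoidal]

/-- The canonical padding `⊗ⁿ(Fⁿ) ⟶ F(⊗ⁿ)` built from prolongations of `F̃` and `F₀`. -/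
def muPow : ∀ A : List C, tF F A ⟶ F.obj (tPow A)
  | [] => ε F
  | a :: l => (F.obj a ◁ muPow l) ≫ μ F a (tPow l)

lemma tF_id' (A : List C) : tPow A = tF (𝟭 C) A := by
  induction A with
  | nil => rfl
  | cons a l ih => show a ⊗ tPow l = a ⊗ tF (𝟭 C) l; rw [ih]

/-- Postcomposition with `F`: the cochain map `⌈F(−)⌉ : X^•(C) → X^•(F)`. -/
def resPost (φ : Fam (𝟭 C)) : Fam F := fun A =>
  muPow F A ≫ F.map (eqToHom (tF_id' A) ≫ φ A)

/-!
Every face of the coboundary of `⌈F(φ)⌉` is `⌈F(·)⌉` of the corresponding face of `φ`: the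
padding `muPow` absorbs the structure maps `μ` that pad the faces, by naturality of `μ` and
its associativity and unitality. As `F` is additive, `⌈F(−)⌉` then commutes with the
alternating sums. Naturality of `⌈F(φ)⌉` combines that of `φ` with that of `muPow`.
-/

/-- The identification `tPow A ⟶ tF (𝟭 C) A`, built one factor at a time so that it unfolds
along the list. -/
def idCast : ∀ A : List C, tPow A ⟶ tF (𝟭 C) A
  | [] => 𝟙 _
  | a :: l => a ◁ idCast l

lemma eqToHom_tF_id' : ∀ A : List C, eqToHom (tF_id' A) = idCast A
  | [] => rfl
  | a :: l => by
    rw [idCast, ← eqToHom_tF_id' l, whiskerLeft_eqToHom]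
    rfl

lemma resPost_eq (φ : Fam (𝟭 C)) (A : List C) :
    resPost F φ A = muPow F A ≫ F.map (idCast A ≫ φ A) := by
  rw [resPost, eqToHom_tF_id']

lemma muPow_natural : ∀ {A B : List C} (fs : HomList A B),
    tFMap F fs ≫ muPow F B = muPow F A ≫ F.map (tPowMap fs)
  | _, _, .nil => by
    dsimp only [tFMap, muPow, tPowMap, tF, tPow]
    simp
  | _, _, .cons f fs => by
    dsimp only [tFMap, muPow, tPowMap, tF, tPow]
    rw [tensorHom_def', Category.assoc, whisker_exchange_assoc,
      ← MonoidalCategory.whiskerLeft_comp_assoc, muPow_natural fs,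
      MonoidalCategory.whiskerLeft_comp_assoc, ← whisker_exchange_assoc, ← tensorHom_def_assoc,
      μ_natural, Category.assoc]

lemma idCast_comp_tFMap : ∀ {A B : List C} (fs : HomList A B),
    idCast A ≫ tFMap (𝟭 C) fs = tPowMap fs ≫ idCast B
  | _, _, .nil => rfl
  | _, _, .cons f fs => by
    dsimp only [idCast, tFMap, tPowMap, tF, tPow, Functor.id_map, Functor.id_obj]
    rw [tensorHom_def', ← MonoidalCategory.whiskerLeft_comp_assoc, idCast_comp_tFMap fs,
      tensorHom_def', MonoidalCategory.whiskerLeft_comp_assoc, whisker_exchange, Category.assoc]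

/-- The inverse of `mergePad`. -/
def mergePadInv : ∀ (A : List C) (i : ℕ), tPow A ⟶ tPow (mergeAt A i)
  | a :: b :: l, 0 => (α_ a b (tPow l)).inv
  | a :: b :: l, i + 1 => a ◁ mergePadInv (b :: l) i
  | [], _ => 𝟙 _
  | [_], _ => 𝟙 _

lemma idCast_comp_mergeHom : ∀ (A : List C) (i : ℕ),
    idCast A ≫ mergeHom (𝟭 C) A i = mergePadInv A i ≫ idCast (mergeAt A i)
  | a :: b :: l, 0 => by
    dsimp only [idCast, mergeHom, mergePadInv, mergeAt, tF, tPow]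
    simp only [id_μ, Functor.id_obj, id_whiskerRight, Category.comp_id]
    exact associator_inv_naturality_right a b (idCast l)
  | a :: b :: l, i + 1 => by
    show a ◁ idCast (b :: l) ≫ a ◁ mergeHom (𝟭 C) (b :: l) i
      = a ◁ mergePadInv (b :: l) i ≫ a ◁ idCast (mergeAt (b :: l) i)
    rw [← MonoidalCategory.whiskerLeft_comp, ← MonoidalCategory.whiskerLeft_comp,
      idCast_comp_mergeHom (b :: l) i]
  | [], _ | [_], _ => (Category.comp_id _).trans (Category.id_comp _).symm

lemma mergeHom_comp_muPow : ∀ (A : List C) (i : ℕ),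
    mergeHom F A i ≫ muPow F (mergeAt A i) = muPow F A ≫ F.map (mergePadInv A i)
  | a :: b :: l, 0 => by
    dsimp only [mergeHom, mergePadInv, mergeAt, muPow, tF, tPow]
    rw [Category.assoc, ← whisker_exchange_assoc, MonoidalCategory.whiskerLeft_comp,
      Category.assoc, Category.assoc, associativity_inv,
      ← associator_inv_naturality_right_assoc]
  | a :: b :: l, i + 1 => by
    show F.obj a ◁ mergeHom F (b :: l) i ≫ F.obj a ◁ muPow F (mergeAt (b :: l) i)
        ≫ μ F a (tPow (mergeAt (b :: l) i))
      = (F.obj a ◁ muPow F (b :: l) ≫ μ F a (tPow (b :: l))) ≫ F.map (a ◁ mergePadInv (b :: l) i)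
    rw [← MonoidalCategory.whiskerLeft_comp_assoc, mergeHom_comp_muPow (b :: l) i,
      MonoidalCategory.whiskerLeft_comp, Category.assoc, μ_natural_right, Category.assoc]
  | [], _ | [_], _ => by
    show 𝟙 _ ≫ muPow F _ = muPow F _ ≫ F.map (𝟙 _)
    simp

lemma splitF_hom_comp_muPow : ∀ (A : List C) (a : C),
    (splitF F A a).hom ≫ muPow F A ▷ F.obj a ≫ μ F (tPow A) a
      = muPow F (A ++ [a]) ≫ F.map (splitC A a).hom
  | [], a => by
    dsimp only [splitF, splitC, muPow, tF, tPow, List.nil_append, Iso.trans_hom, Iso.symm_hom]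
    rw [Category.assoc, left_unitality_inv, F.map_comp]
    simp
  | b :: A, a => by
    dsimp only [splitF, splitC, muPow, tF, tPow, List.cons_append, Iso.trans_hom,
      Iso.symm_hom]
    simp only [MonoidalCategory.whiskerLeftIso_hom, Category.assoc, F.map_comp]
    rw [← μ_natural_right_assoc, ← MonoidalCategory.whiskerLeft_comp_assoc,
      ← splitF_hom_comp_muPow A a]
    simp only [comp_whiskerRight, MonoidalCategory.whiskerLeft_comp, Category.assoc,
      associativity_inv, associator_inv_naturality_middle_assoc]

lemma idCast_comp_splitF_hom : ∀ (A : List C) (a : C),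
    idCast (A ++ [a]) ≫ (splitF (𝟭 C) A a).hom = (splitC A a).hom ≫ idCast A ▷ a
  | [], a => by
    dsimp only [splitF, splitC, idCast, tF, tPow, List.nil_append, Iso.trans_hom, Iso.symm_hom]
    simp
  | b :: A, a => by
    dsimp only [splitF, splitC, idCast, tF, tPow, List.cons_append, Iso.trans_hom,
      Iso.symm_hom]
    simp only [MonoidalCategory.whiskerLeftIso_hom, Functor.id_obj]
    rw [← Category.assoc, ← MonoidalCategory.whiskerLeft_comp, idCast_comp_splitF_hom A a,
      MonoidalCategory.whiskerLeft_comp, Category.assoc, associator_inv_naturality_middle,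
      Category.assoc]

section

variable (φ : Fam (𝟭 C))

lemma firstFace_resPost (a : C) (l : List C) :
    firstFace F (resPost F φ) a l
      = muPow F (a :: l) ≫ F.map (idCast (a :: l) ≫ firstFace (𝟭 C) φ a l) := by
  dsimp only [firstFace, muPow, idCast, tF, tPow]
  simp only [resPost_eq, id_μ, Category.comp_id, MonoidalCategory.whiskerLeft_comp,
    Category.assoc, μ_natural_right, F.map_comp, Functor.id_obj]
  rw [μ_natural_right_assoc]

lemma innerFace_resPost (A : List C) (i : ℕ) :
    innerFace F (resPost F φ) A i
      = muPow F A ≫ F.map (idCast A ≫ innerFace (𝟭 C) φ A i) := by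
  dsimp only [innerFace]
  rw [resPost_eq, ← Category.assoc (idCast A), idCast_comp_mergeHom]
  simp only [F.map_comp, Category.assoc, Functor.id_map]
  rw [← Category.assoc (muPow F A), ← mergeHom_comp_muPow, Category.assoc]

-- Stated for an arbitrary splitting `B ++ [b] = A`, so that the splitting can be substituted away.
lemma lastFace_resPost_of_append_eq {A : List C} (B : List C) (b : C) (he : B ++ [b] = A) :
    (eqToHom (congrArg (tF F) he.symm) ≫ (splitF F B b).hom ≫ (resPost F φ B ▷ F.obj b)
        ≫ μ F (tPow B) b ≫ F.map (splitC B b).inv ≫ F.map (eqToHom (congrArg tPow he))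
      : tF F A ⟶ F.obj (tPow A))
    = muPow F A ≫ F.map (idCast A
        ≫ eqToHom (congrArg (tF (𝟭 C)) he.symm) ≫ (splitF (𝟭 C) B b).hom
        ≫ (φ B ▷ (𝟭 C).obj b) ≫ μ (𝟭 C) (tPow B) b
        ≫ (𝟭 C).map (splitC B b).inv ≫ (𝟭 C).map (eqToHom (congrArg tPow he))) := by
  subst he
  simp only [eqToHom_refl, Category.id_comp, Category.comp_id, F.map_id, Functor.id_map,
    id_μ, Functor.id_obj]
  rw [resPost_eq, ← Category.assoc (idCast _), idCast_comp_splitF_hom]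
  dsimp only [Functor.id_obj]
  rw [comp_whiskerRight, Category.assoc, μ_natural_left_assoc]
  slice_lhs 1 3 => rw [splitF_hom_comp_muPow]
  simp only [comp_whiskerRight, F.map_comp, Category.assoc]

lemma lastFace_resPost (A : List C) (h : A ≠ []) :
    lastFace F (resPost F φ) A h = muPow F A ≫ F.map (idCast A ≫ lastFace (𝟭 C) φ A h) :=
  lastFace_resPost_of_append_eq F φ A.dropLast (A.getLast h) (List.dropLast_append_getLast h)

lemma resPost_natural (hφ : Natural (𝟭 C) φ) : Natural F (resPost F φ) := by
  intro A B fs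
  rw [resPost_eq, resPost_eq, ← Category.assoc, muPow_natural, Category.assoc, ← F.map_comp,
    ← Category.assoc, ← idCast_comp_tFMap, Category.assoc, hφ fs, Functor.id_map]
  simp only [F.map_comp, Category.assoc]

end

variable [Preadditive C] [Preadditive D] [F.Additive]

lemma d_resPost (φ : Fam (𝟭 C)) :
    d F (resPost F φ) = resPost F (d (𝟭 C) φ) := by
  funext A
  rw [resPost_eq]
  cases A with
  | nil => simp [d]
  | cons a l =>
    simp only [d, firstFace_resPost, innerFace_resPost, lastFace_resPost, Preadditive.comp_add,
      Preadditive.comp_sum, Preadditive.comp_zsmul, Functor.map_add, Functor.map_sum,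
      Functor.map_zsmul]

theorem resPost_is_cochain_map (φ : Fam (𝟭 C)) (hφ : Natural (𝟭 C) φ) :
    Natural F (resPost F φ) ∧ d F (resPost F φ) = resPost F (d (𝟭 C) φ) :=
  ⟨resPost_natural F φ hφ, d_resPost F φ⟩

end DeformationComplex
end

section
/- Let C be an R-linear semigroupal category. Two first-order deformations α + α⁽¹⁾ε and α + a⁽¹⁾ε of the associator of C (over R[ε]/(ε²)) are equivalent via a semigroupal functor with underlying functor the identity and structure map of the form 1_{A⊗B} + φ_{A,B}ε if and only if α⁽¹⁾ − a⁽¹⁾ = δ(φ); consequently first-order deformations of C are classified up to equivalence by H³(C) = H³(X^•(C), δ). -/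
/-!
Morphisms of `C ⊗ R[ε]/(ε²)` are encoded as pairs `(f₀, f₁) = f₀ + f₁ ε`, with composition
`(f₀, f₁) ≫ (g₀, g₁) = (f₀ ≫ g₀, f₀ ≫ g₁ + f₁ ≫ g₀)` and tensor
`(f₀, f₁) ⊗ (g₀, g₁) = (f₀ ⊗ g₀, f₀ ⊗ g₁ + f₁ ⊗ g₀)`.

Both paths of the hexagon have degree-zero part the associator of `C`, and since the structure
map is the identity in degree zero, their `ε`-parts are `αd` resp. `ad` plus the four terms of
`δφ`, split by sign; so the hexagon holds iff `αd - ad = δφ`.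
-/

open CategoryTheory MonoidalCategory

universe v u

variable {C : Type u} [Category.{v} C] [MonoidalCategory C] [Preadditive C]
  [MonoidalPreadditive C]

/-- Composition in `C ⊗ R[ε]/(ε²)` in terms of pairs of morphisms of `C`. -/
def compEps {X Y Z : C} (f : (X ⟶ Y) × (X ⟶ Y)) (g : (Y ⟶ Z) × (Y ⟶ Z)) :
    (X ⟶ Z) × (X ⟶ Z) :=
  (f.1 ≫ g.1, f.1 ≫ g.2 + f.2 ≫ g.1)

/-- Tensor product of morphisms in `C ⊗ R[ε]/(ε²)`. -/
def tensEps {X Y X' Y' : C} (f : (X ⟶ Y) × (X ⟶ Y)) (g : (X' ⟶ Y') × (X' ⟶ Y')) :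
    (X ⊗ X' ⟶ Y ⊗ Y') × (X ⊗ X' ⟶ Y ⊗ Y') :=
  (f.1 ⊗ₘ g.1, f.1 ⊗ₘ g.2 + f.2 ⊗ₘ g.1)

/-- Identity morphism of `C ⊗ R[ε]/(ε²)`. -/
def idEps (X : C) : (X ⟶ X) × (X ⟶ X) := (𝟙 X, 0)

/-- The deformation coboundary of a `2`-cochain `φ`, padded by associators so as to be a
morphism `(A ⊗ B) ⊗ C' ⟶ A ⊗ (B ⊗ C')`. -/
def delta2 (φ : ∀ A B : C, A ⊗ B ⟶ A ⊗ B) (A B C' : C) :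
    (A ⊗ B) ⊗ C' ⟶ A ⊗ (B ⊗ C') :=
  (α_ A B C').hom ≫ (A ◁ φ B C')
    - φ (A ⊗ B) C' ≫ (α_ A B C').hom
    + (α_ A B C').hom ≫ φ A (B ⊗ C')
    - (φ A B ▷ C') ≫ (α_ A B C').hom

lemma structureMap_comp_deformedAssociator (αd : ∀ A B C' : C, (A ⊗ B) ⊗ C' ⟶ A ⊗ (B ⊗ C'))
    (φ : ∀ A B : C, A ⊗ B ⟶ A ⊗ B) (A B C' : C) :
    compEps (tensEps (𝟙 (A ⊗ B), φ A B) (idEps C'))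
        (compEps (𝟙 ((A ⊗ B) ⊗ C'), φ (A ⊗ B) C') ((α_ A B C').hom, αd A B C')) =
      ((α_ A B C').hom,
        αd A B C' + φ (A ⊗ B) C' ≫ (α_ A B C').hom + φ A B ▷ C' ≫ (α_ A B C').hom) := by
  simp [compEps, tensEps, idEps, tensorHom_id]

lemma deformedAssociator_comp_structureMap (ad : ∀ A B C' : C, (A ⊗ B) ⊗ C' ⟶ A ⊗ (B ⊗ C'))
    (φ : ∀ A B : C, A ⊗ B ⟶ A ⊗ B) (A B C' : C) :
    compEps ((α_ A B C').hom, ad A B C')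
        (compEps (tensEps (idEps A) (𝟙 (B ⊗ C'), φ B C')) (𝟙 (A ⊗ (B ⊗ C')), φ A (B ⊗ C'))) =
      ((α_ A B C').hom,
        (α_ A B C').hom ≫ φ A (B ⊗ C') + (α_ A B C').hom ≫ A ◁ φ B C' + ad A B C') := by
  simp [compEps, tensEps, idEps, id_tensorHom]

theorem firstOrder_deformations_equivalent_iff_coboundary_general
    (αd ad : ∀ A B C' : C, ((A ⊗ B) ⊗ C' ⟶ A ⊗ (B ⊗ C')))
    (φ : ∀ A B : C, A ⊗ B ⟶ A ⊗ B) :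
    -- the coherence hexagon for the identity functor with structure map `1 + φ ε`,
    -- as a semigroupal functor from `(C, α + ad ε)` to `(C, α + αd ε)` ...
    (∀ A B C' : C,
        compEps (tensEps (𝟙 (A ⊗ B), φ A B) (idEps C'))
          (compEps (𝟙 ((A ⊗ B) ⊗ C'), φ (A ⊗ B) C') ((α_ A B C').hom, αd A B C'))
      = compEps ((α_ A B C').hom, ad A B C')
          (compEps (tensEps (idEps A) (𝟙 (B ⊗ C'), φ B C'))
            (𝟙 (A ⊗ (B ⊗ C')), φ A (B ⊗ C')))) ↔
    -- ... holds iff `αd - ad` is the coboundary of `φ`.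
    (∀ A B C' : C, αd A B C' - ad A B C' = delta2 φ A B C') := by
  refine forall_congr' fun A => forall_congr' fun B => forall_congr' fun C' => ?_
  rw [structureMap_comp_deformedAssociator, deformedAssociator_comp_structureMap, Prod.mk.injEq,
    and_iff_right rfl, delta2]
  constructor <;> intro h <;> linear_combination (norm := abel) h

theorem firstOrder_deformations_equivalent_iff_coboundary
    (R : Type*) [CommRing R] [Linear R C] [MonoidalLinear R C]
    (αd ad : ∀ A B C' : C, ((A ⊗ B) ⊗ C' ⟶ A ⊗ (B ⊗ C')))
    (φ : ∀ A B : C, A ⊗ B ⟶ A ⊗ B)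
    (hφ : ∀ {A A' B B' : C} (f : A ⟶ A') (g : B ⟶ B'),
      (f ⊗ₘ g) ≫ φ A' B' = φ A B ≫ (f ⊗ₘ g)) :
    -- the coherence hexagon for the identity functor with structure map `1 + φ ε`,
    -- as a semigroupal functor from `(C, α + ad ε)` to `(C, α + αd ε)` ...
    (∀ A B C' : C,
        compEps (tensEps (𝟙 (A ⊗ B), φ A B) (idEps C'))
          (compEps (𝟙 ((A ⊗ B) ⊗ C'), φ (A ⊗ B) C') ((α_ A B C').hom, αd A B C'))
      = compEps ((α_ A B C').hom, ad A B C')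
          (compEps (tensEps (idEps A) (𝟙 (B ⊗ C'), φ B C'))
            (𝟙 (A ⊗ (B ⊗ C')), φ A (B ⊗ C')))) ↔
    -- ... holds iff `αd - ad` is the coboundary of `φ`.
    (∀ A B C' : C, αd A B C' - ad A B C' = delta2 φ A B C') :=
  firstOrder_deformations_equivalent_iff_coboundary_general αd ad φ
end

section
/- Let C be a monoidal category over R and α̃ = Σᵢ α⁽ⁱ⁾εⁱ a formal deformation of the associator making (C⊗R[[ε]], ⊗, α̃) semigroupal. Given any family of maps ν⁽ⁱ⁾ : I → I with ν⁽⁰⁾ = λ_I = ρ_I, the transformations λ̃_A = Σₙ (Σ_{i+j=n} ⌈α⁽ⁱ⁾_{A,I,I}∘(A⊗ν⁽ʲ⁾)⌉)εⁿ and ρ̃_B = Σₙ (Σ_{i+j=n} ⌈β⁽ⁱ⁾_{I,I,B}∘(ν⁽ʲ⁾⊗B)⌉)εⁿ, where α̃⁻¹ = Σᵢ β⁽ⁱ⁾εⁱ, are unit transformations making the semigroupal deformation a deformation of C as a monoidal category. -/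
/-!
Work in the category `Series C` of formal power series of morphisms of `C`. There `α̃` is an
invertible associator satisfying the pentagon, and with `ũ = λ_I ≫ ν : I ⊗ I ⟶ I` the unitors
`ρ̃_A` and `λ̃_B` are the conjugates, by unitors of `C`, of `α̃_{A,I,I} ≫ A ◁ ũ` and
`α̃⁻¹_{I,I,B} ≫ ũ ▷ B`. Since `- ▷ I` and `I ◁ -` are conjugation by the unitors, this gives
`ρ̃_A ▷ I = α̃_{A,I,I} ≫ A ◁ ũ` and `I ◁ λ̃_B = α̃⁻¹_{I,I,B} ≫ ũ ▷ B`. The triangle for `(A, B)`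
then follows from the pentagon for `(A, I, I, B)` and naturality of `α̃`. At `A = B = I`,
cancelling `α̃` and the faithful functors `I ◁ -`, `- ▷ I` yields `ρ̃_I = ũ = λ̃_I`.
-/

open CategoryTheory MonoidalCategory

universe v u

variable {C : Type u} [Category.{v} C] [MonoidalCategory C] [Preadditive C]
  [MonoidalPreadditive C]

/-- The degree-`n` coefficient of the deformed right unitor
`ρ̃_A = Σₙ (Σ_{i+j=n} ⌈α⁽ⁱ⁾_{A,I,I} ∘ (A ⊗ ν⁽ʲ⁾)⌉) εⁿ`, padded by structure maps of `C`. -/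
def deformedRho (αf : ℕ → ∀ A B C' : C, (A ⊗ B) ⊗ C' ⟶ A ⊗ (B ⊗ C'))
    (ν : ℕ → (𝟙_ C ⟶ 𝟙_ C)) (n : ℕ) (A : C) : A ⊗ 𝟙_ C ⟶ A :=
  ∑ p ∈ Finset.HasAntidiagonal.antidiagonal n,
    ((ρ_ A).inv ▷ 𝟙_ C) ≫ αf p.1 A (𝟙_ C) (𝟙_ C) ≫ (A ◁ (λ_ (𝟙_ C)).hom) ≫
      (A ◁ ν p.2) ≫ (ρ_ A).hom

/-- The degree-`n` coefficient of the deformed left unitor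
`λ̃_B = Σₙ (Σ_{i+j=n} ⌈β⁽ⁱ⁾_{I,I,B} ∘ (ν⁽ʲ⁾ ⊗ B)⌉) εⁿ`, padded by structure maps of `C`. -/
def deformedLambda (βf : ℕ → ∀ A B C' : C, A ⊗ (B ⊗ C') ⟶ (A ⊗ B) ⊗ C')
    (ν : ℕ → (𝟙_ C ⟶ 𝟙_ C)) (n : ℕ) (B : C) : 𝟙_ C ⊗ B ⟶ B :=
  ∑ p ∈ Finset.HasAntidiagonal.antidiagonal n,
    (𝟙_ C ◁ (λ_ B).inv) ≫ βf p.1 (𝟙_ C) (𝟙_ C) B ≫ ((λ_ (𝟙_ C)).hom ▷ B) ≫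
      (ν p.2 ▷ B) ≫ (λ_ B).hom

open Finset

section

omit [MonoidalCategory C] [MonoidalPreadditive C]

/-- The ε-adic extension of scalars of `C`: a morphism `of X ⟶ of Y` is a formal power series
`Σₙ fₙ εⁿ` of morphisms `X ⟶ Y`, stored as its coefficient sequence, and composition is the
Cauchy product. -/
structure Series (C : Type u) where
  of ::
  obj : C

namespace Series

instance : Category.{v} (Series C) where
  Hom X Y := ℕ → (X.obj ⟶ Y.obj)
  id X n := if n = 0 then 𝟙 X.obj else 0
  comp f g n := ∑ p ∈ antidiagonal n, f p.1 ≫ g p.2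
  id_comp f := by
    funext n
    rw [sum_eq_single (0, n) (by aesop) (by simp)]
    simp
  comp_id f := by
    funext n
    rw [sum_eq_single (n, 0) (by aesop) (by simp)]
    simp
  assoc f g h := by
    funext n
    simp only [Preadditive.sum_comp, Preadditive.comp_sum, Category.assoc, sum_sigma']
    apply sum_nbij' (fun ⟨⟨_, j⟩, ⟨k, l⟩⟩ ↦ ⟨(k, l + j), (l, j)⟩)
      (fun ⟨⟨i, _⟩, ⟨k, l⟩⟩ ↦ ⟨(i + k, l), (i, k)⟩) <;> aesop (add simp [add_assoc])

lemma comp_apply {X Y Z : Series C} (f : X ⟶ Y) (g : Y ⟶ Z) (n : ℕ) :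
    (f ≫ g) n = ∑ p ∈ antidiagonal n, f p.1 ≫ g p.2 := rfl

lemma comp_eq_comp_of_coeff {W X Y Z : Series C} {φ : W ⟶ X} {g : X ⟶ Z} {f : W ⟶ Y}
    {ψ : Y ⟶ Z} (h : ∀ i j, φ i ≫ g j = f j ≫ ψ i) : φ ≫ g = f ≫ ψ := by
  funext n
  rw [comp_apply, comp_apply, ← Nat.sum_antidiagonal_swap]
  exact sum_congr rfl fun p _ => h p.2 p.1

def ofHom {X Y : C} (f : X ⟶ Y) : of X ⟶ of Y := fun n => if n = 0 then f else 0

variable {X Y Z : C}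

@[simp]
lemma ofHom_comp_apply (f : X ⟶ Y) (g : of Y ⟶ of Z) (n : ℕ) :
    (ofHom f ≫ g) n = f ≫ g n := by
  rw [comp_apply, sum_eq_single (0, n) ?_ (by simp)]
  · simp [ofHom]
  rintro ⟨i, j⟩ hij hne
  have hi : i ≠ 0 := by rintro rfl; simp_all
  simp [ofHom, hi]

@[simp]
lemma comp_ofHom_apply (f : of X ⟶ of Y) (g : Y ⟶ Z) (n : ℕ) :
    (f ≫ ofHom g) n = f n ≫ g := by
  rw [comp_apply, sum_eq_single (n, 0) ?_ (by simp)]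
  · simp [ofHom]
  rintro ⟨i, j⟩ hij hne
  have hj : j ≠ 0 := by rintro rfl; simp_all
  simp [ofHom, hj]

lemma ofHom_comp (f : X ⟶ Y) (g : Y ⟶ Z) : ofHom (f ≫ g) = ofHom f ≫ ofHom g := by
  funext n
  by_cases hn : n = 0 <;> simp [ofHom, hn]

lemma ofHom_id : ofHom (𝟙 X) = 𝟙 (of X) := rfl

end Series

end

namespace Series

section

omit [MonoidalPreadditive C]

variable {X X' Y Y' : C}

def whiskerLeft (A : C) (f : of X ⟶ of Y) : of (A ⊗ X) ⟶ of (A ⊗ Y) := fun n => A ◁ f n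

def whiskerRight (f : of X ⟶ of Y) (B : C) : of (X ⊗ B) ⟶ of (Y ⊗ B) := fun n => f n ▷ B

infixr:81 " ◁ₛ " => Series.whiskerLeft

infixl:81 " ▷ₛ " => Series.whiskerRight

@[simp]
lemma whiskerLeft_apply (A : C) (f : of X ⟶ of Y) (n : ℕ) : (A ◁ₛ f) n = A ◁ f n := rfl

@[simp]
lemma whiskerRight_apply (f : of X ⟶ of Y) (B : C) (n : ℕ) : (f ▷ₛ B) n = f n ▷ B := rfl

lemma ofHom_whiskerRight_comp_whiskerLeft (f : X ⟶ X') (h : of Y ⟶ of Y') :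
    ofHom (f ▷ Y) ≫ X' ◁ₛ h = X ◁ₛ h ≫ ofHom (f ▷ Y') := by
  funext n
  simp [whisker_exchange]

lemma unit_whiskerLeft_conj {B Y : C} (S : of (𝟙_ C ⊗ (𝟙_ C ⊗ B)) ⟶ of (𝟙_ C ⊗ Y)) :
    𝟙_ C ◁ₛ (ofHom (𝟙_ C ◁ (λ_ B).inv) ≫ S ≫ ofHom (λ_ Y).hom) = S := by
  funext n
  simp

lemma whiskerRight_unit_conj {A Y : C} (S : of ((A ⊗ 𝟙_ C) ⊗ 𝟙_ C) ⟶ of (Y ⊗ 𝟙_ C)) :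
    (ofHom ((ρ_ A).inv ▷ 𝟙_ C) ≫ S ≫ ofHom (ρ_ Y).hom) ▷ₛ 𝟙_ C = S := by
  funext n
  simp

lemma unit_whiskerLeft_injective {f g : of X ⟶ of Y} (h : 𝟙_ C ◁ₛ f = 𝟙_ C ◁ₛ g) : f = g :=
  funext fun n => (whiskerLeft_iff _ _).1 (congrFun h n)

lemma whiskerRight_unit_injective {f g : of X ⟶ of Y} (h : f ▷ₛ 𝟙_ C = g ▷ₛ 𝟙_ C) : f = g :=
  funext fun n => (whiskerRight_iff _ _).1 (congrFun h n)

variable (C) in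
structure Associator where
  assoc (A B X : C) : of ((A ⊗ B) ⊗ X) ≅ of (A ⊗ (B ⊗ X))
  assoc_naturality (n : ℕ) {A A' B B' X X' : C} (f : A ⟶ A') (g : B ⟶ B') (h : X ⟶ X') :
    ((f ⊗ₘ g) ⊗ₘ h) ≫ (assoc A' B' X').hom n = (assoc A B X).hom n ≫ (f ⊗ₘ (g ⊗ₘ h))
  pentagon (A B X Y : C) :
    (assoc (A ⊗ B) X Y).hom ≫ (assoc A B (X ⊗ Y)).hom =
      (assoc A B X).hom ▷ₛ Y ≫ (assoc A (B ⊗ X) Y).hom ≫ A ◁ₛ (assoc B X Y).hom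

namespace Associator

variable (a : Associator C)

lemma assoc_naturality_left {A A' : C} (f : A ⟶ A') (B X : C) :
    ofHom ((f ▷ B) ▷ X) ≫ (a.assoc A' B X).hom = (a.assoc A B X).hom ≫ ofHom (f ▷ (B ⊗ X)) := by
  funext n
  simpa using a.assoc_naturality n f (𝟙 B) (𝟙 X)

lemma assoc_inv_naturality_middle (A : C) {B B' : C} (g : of B ⟶ of B') (X : C) :
    (a.assoc A B X).inv ≫ (A ◁ₛ g) ▷ₛ X = A ◁ₛ (g ▷ₛ X) ≫ (a.assoc A B' X).inv := by
  rw [Iso.inv_comp_eq, ← Category.assoc, Iso.eq_comp_inv]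
  exact comp_eq_comp_of_coeff fun i j => by
    simpa using a.assoc_naturality j (𝟙 A) (g i) (𝟙 X)

lemma assoc_inv_naturality_right (A B : C) {X X' : C} (h : of X ⟶ of X') :
    (a.assoc A B X).inv ≫ (A ⊗ B) ◁ₛ h = A ◁ₛ B ◁ₛ h ≫ (a.assoc A B X').inv := by
  rw [Iso.inv_comp_eq, ← Category.assoc, Iso.eq_comp_inv]
  exact comp_eq_comp_of_coeff fun i j => by
    simpa using a.assoc_naturality j (𝟙 A) (𝟙 B) (h i)

variable (ν : of (𝟙_ C) ⟶ of (𝟙_ C))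

def rightUnitor (A : C) : of (A ⊗ 𝟙_ C) ⟶ of A :=
  ofHom ((ρ_ A).inv ▷ 𝟙_ C) ≫
    ((a.assoc A (𝟙_ C) (𝟙_ C)).hom ≫ A ◁ₛ (ofHom (λ_ (𝟙_ C)).hom ≫ ν)) ≫ ofHom (ρ_ A).hom

def leftUnitor (B : C) : of (𝟙_ C ⊗ B) ⟶ of B :=
  ofHom (𝟙_ C ◁ (λ_ B).inv) ≫
    ((a.assoc (𝟙_ C) (𝟙_ C) B).inv ≫ (ofHom (λ_ (𝟙_ C)).hom ≫ ν) ▷ₛ B) ≫ ofHom (λ_ B).hom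

lemma rightUnitor_whiskerRight_unit (A : C) :
    a.rightUnitor ν A ▷ₛ 𝟙_ C =
      (a.assoc A (𝟙_ C) (𝟙_ C)).hom ≫ A ◁ₛ (ofHom (λ_ (𝟙_ C)).hom ≫ ν) :=
  whiskerRight_unit_conj _

lemma unit_whiskerLeft_leftUnitor (B : C) :
    𝟙_ C ◁ₛ a.leftUnitor ν B =
      (a.assoc (𝟙_ C) (𝟙_ C) B).inv ≫ (ofHom (λ_ (𝟙_ C)).hom ≫ ν) ▷ₛ B :=
  unit_whiskerLeft_conj _

lemma rightUnitor_apply (A : C) (n : ℕ) :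
    a.rightUnitor ν A n = deformedRho (fun n A B X => (a.assoc A B X).hom n) ν n A := by
  rw [Associator.rightUnitor, ofHom_comp_apply, comp_ofHom_apply, comp_apply]
  simp [deformedRho, Preadditive.comp_sum, Preadditive.sum_comp]

lemma leftUnitor_apply (B : C) (n : ℕ) :
    a.leftUnitor ν B n = deformedLambda (fun n A B X => (a.assoc A B X).inv n) ν n B := by
  rw [Associator.leftUnitor, ofHom_comp_apply, comp_ofHom_apply, comp_apply]
  simp [deformedLambda, Preadditive.comp_sum, Preadditive.sum_comp]

end Associator

end

variable {X Y Z : C}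

lemma whiskerLeft_comp (A : C) (f : of X ⟶ of Y) (g : of Y ⟶ of Z) :
    A ◁ₛ (f ≫ g) = A ◁ₛ f ≫ A ◁ₛ g := by
  funext n
  simp [comp_apply, whiskerLeft_sum]

lemma whiskerRight_comp (f : of X ⟶ of Y) (g : of Y ⟶ of Z) (B : C) :
    (f ≫ g) ▷ₛ B = f ▷ₛ B ≫ g ▷ₛ B := by
  funext n
  simp [comp_apply, sum_whiskerRight]

lemma whiskerLeft_id (A X : C) : A ◁ₛ 𝟙 (of X) = 𝟙 (of (A ⊗ X)) := by
  funext n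
  by_cases hn : n = 0 <;> simp [CategoryStruct.id, hn]

lemma whiskerRight_ofHom (f : X ⟶ Y) (B : C) : ofHom f ▷ₛ B = ofHom (f ▷ B) := by
  funext n
  by_cases hn : n = 0 <;> simp [ofHom, hn]

namespace Associator

variable (a : Associator C)

lemma assoc_hom_whiskerRight (A B X Y : C) :
    (a.assoc A B X).hom ▷ₛ Y =
      (a.assoc (A ⊗ B) X Y).hom ≫ (a.assoc A B (X ⊗ Y)).hom ≫
        A ◁ₛ (a.assoc B X Y).inv ≫ (a.assoc A (B ⊗ X) Y).inv := by
  rw [reassoc_of% a.pentagon, ← reassoc_of% whiskerLeft_comp, Iso.hom_inv_id, whiskerLeft_id,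
    Category.id_comp, Iso.hom_inv_id, Category.comp_id]

variable (ν : of (𝟙_ C) ⟶ of (𝟙_ C))

theorem triangle (A B : C) :
    (a.assoc A (𝟙_ C) B).hom ≫ A ◁ₛ a.leftUnitor ν B = a.rightUnitor ν A ▷ₛ B := by
  symm
  simp only [Associator.rightUnitor, whiskerRight_comp, whiskerRight_ofHom, assoc_hom_whiskerRight,
    Category.assoc]
  rw [reassoc_of% a.assoc_inv_naturality_middle, ← reassoc_of% whiskerLeft_comp,
    ← unit_whiskerLeft_leftUnitor, ← reassoc_of% a.assoc_inv_naturality_right,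
    Iso.hom_inv_id_assoc, ← ofHom_whiskerRight_comp_whiskerLeft,
    reassoc_of% a.assoc_naturality_left, ← reassoc_of% ofHom_comp, ← comp_whiskerRight,
    Iso.inv_hom_id, id_whiskerRight, ofHom_id, Category.id_comp]

theorem unitors_equal : a.rightUnitor ν (𝟙_ C) = a.leftUnitor ν (𝟙_ C) := by
  have hleft : 𝟙_ C ◁ₛ a.leftUnitor ν (𝟙_ C) = 𝟙_ C ◁ₛ (ofHom (λ_ (𝟙_ C)).hom ≫ ν) := by
    rw [← cancel_epi (a.assoc _ _ _).hom, a.triangle, rightUnitor_whiskerRight_unit]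
  have hright : a.rightUnitor ν (𝟙_ C) ▷ₛ 𝟙_ C = (ofHom (λ_ (𝟙_ C)).hom ≫ ν) ▷ₛ 𝟙_ C := by
    rw [rightUnitor_whiskerRight_unit, ← Iso.eq_inv_comp, ← unit_whiskerLeft_leftUnitor, hleft]
  rw [whiskerRight_unit_injective hright, unit_whiskerLeft_injective hleft]

end Associator

end Series

theorem semigroupal_deformation_extends_to_monoidal_general
    (αf : ℕ → ∀ A B C' : C, (A ⊗ B) ⊗ C' ⟶ A ⊗ (B ⊗ C'))
    (βf : ℕ → ∀ A B C' : C, A ⊗ (B ⊗ C') ⟶ (A ⊗ B) ⊗ C')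
    (hnat : ∀ (i : ℕ) {A A' B B' X X' : C} (f : A ⟶ A') (g : B ⟶ B') (h : X ⟶ X'),
      ((f ⊗ₘ g) ⊗ₘ h) ≫ αf i A' B' X' = αf i A B X ≫ (f ⊗ₘ (g ⊗ₘ h)))
    -- the pentagon holds degreewise for `α̃`
    (hpent : ∀ (n : ℕ) (A B C' D : C),
      (∑ p ∈ Finset.HasAntidiagonal.antidiagonal n, αf p.1 (A ⊗ B) C' D ≫ αf p.2 A B (C' ⊗ D))
        = ∑ p ∈ Finset.HasAntidiagonal.antidiagonal n, ∑ q ∈ Finset.HasAntidiagonal.antidiagonal p.2,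
            (αf p.1 A B C' ▷ D) ≫ αf q.1 A (B ⊗ C') D ≫ (A ◁ αf q.2 B C' D))
    -- `β̃` is a two-sided inverse of `α̃` (as formal power series)
    (hinv₁ : ∀ (n : ℕ) (A B C' : C),
      (∑ p ∈ Finset.HasAntidiagonal.antidiagonal n, αf p.1 A B C' ≫ βf p.2 A B C')
        = if n = 0 then 𝟙 ((A ⊗ B) ⊗ C') else 0)
    (hinv₂ : ∀ (n : ℕ) (A B C' : C),
      (∑ p ∈ Finset.HasAntidiagonal.antidiagonal n, βf p.1 A B C' ≫ αf p.2 A B C')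
        = if n = 0 then 𝟙 (A ⊗ (B ⊗ C')) else 0)
    (ν : ℕ → (𝟙_ C ⟶ 𝟙_ C)) :
    -- the triangle coherence law holds degreewise …
    (∀ (n : ℕ) (A B : C),
      (∑ p ∈ Finset.HasAntidiagonal.antidiagonal n,
          αf p.1 A (𝟙_ C) B ≫ (A ◁ deformedLambda βf ν p.2 B))
        = deformedRho αf ν n A ▷ B) ∧
    -- … together with the bigon `ρ̃_I = λ̃_I`
    (∀ n : ℕ, deformedRho αf ν n (𝟙_ C) = deformedLambda βf ν n (𝟙_ C)) := by
  let a : Series.Associator C :=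
    { assoc A B X :=
        { hom n := αf n A B X
          inv n := βf n A B X
          hom_inv_id := funext (hinv₁ · A B X)
          inv_hom_id := funext (hinv₂ · A B X) }
      assoc_naturality := hnat
      pentagon A B X Y := funext fun n => by
        simpa only [Series.comp_apply, Series.whiskerLeft_apply, Series.whiskerRight_apply,
          Preadditive.comp_sum] using hpent n A B X Y }
  refine ⟨fun n A B => ?_, fun n => ?_⟩
  · simpa only [Series.comp_apply, Series.whiskerLeft_apply, Series.whiskerRight_apply,
      a.leftUnitor_apply, a.rightUnitor_apply] using congrFun (a.triangle ν A B) n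
  · have h := congrFun (a.unitors_equal ν) n
    rwa [a.rightUnitor_apply, a.leftUnitor_apply] at h

theorem semigroupal_deformation_extends_to_monoidal
    (R : Type*) [CommRing R] [Linear R C] [MonoidalLinear R C]
    (αf : ℕ → ∀ A B C' : C, (A ⊗ B) ⊗ C' ⟶ A ⊗ (B ⊗ C'))
    (βf : ℕ → ∀ A B C' : C, A ⊗ (B ⊗ C') ⟶ (A ⊗ B) ⊗ C')
    (hα₀ : ∀ A B C' : C, αf 0 A B C' = (α_ A B C').hom)
    (hnat : ∀ (i : ℕ) {A A' B B' X X' : C} (f : A ⟶ A') (g : B ⟶ B') (h : X ⟶ X'),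
      ((f ⊗ₘ g) ⊗ₘ h) ≫ αf i A' B' X' = αf i A B X ≫ (f ⊗ₘ (g ⊗ₘ h)))
    -- the pentagon holds degreewise for `α̃`
    (hpent : ∀ (n : ℕ) (A B C' D : C),
      (∑ p ∈ Finset.HasAntidiagonal.antidiagonal n, αf p.1 (A ⊗ B) C' D ≫ αf p.2 A B (C' ⊗ D))
        = ∑ p ∈ Finset.HasAntidiagonal.antidiagonal n, ∑ q ∈ Finset.HasAntidiagonal.antidiagonal p.2,
            (αf p.1 A B C' ▷ D) ≫ αf q.1 A (B ⊗ C') D ≫ (A ◁ αf q.2 B C' D))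
    -- `β̃` is a two-sided inverse of `α̃` (as formal power series)
    (hinv₁ : ∀ (n : ℕ) (A B C' : C),
      (∑ p ∈ Finset.HasAntidiagonal.antidiagonal n, αf p.1 A B C' ≫ βf p.2 A B C')
        = if n = 0 then 𝟙 ((A ⊗ B) ⊗ C') else 0)
    (hinv₂ : ∀ (n : ℕ) (A B C' : C),
      (∑ p ∈ Finset.HasAntidiagonal.antidiagonal n, βf p.1 A B C' ≫ αf p.2 A B C')
        = if n = 0 then 𝟙 (A ⊗ (B ⊗ C')) else 0)
    (ν : ℕ → (𝟙_ C ⟶ 𝟙_ C)) (hν₀ : ν 0 = 𝟙 (𝟙_ C)) :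
    -- the triangle coherence law holds degreewise …
    (∀ (n : ℕ) (A B : C),
      (∑ p ∈ Finset.HasAntidiagonal.antidiagonal n,
          αf p.1 A (𝟙_ C) B ≫ (A ◁ deformedLambda βf ν p.2 B))
        = deformedRho αf ν n A ▷ B) ∧
    -- … together with the bigon `ρ̃_I = λ̃_I`
    (∀ n : ℕ, deformedRho αf ν n (𝟙_ C) = deformedLambda βf ν n (𝟙_ C)) :=
  semigroupal_deformation_extends_to_monoidal_general αf βf hnat hpent hinv₁ hinv₂ ν
end

section
/- In a monoidal category, if ψ_{A,B,C}, φ_{A,B,C} : (A⊗B)⊗C → A⊗(B⊗C) are natural transformations, then the padded composites satisfy ⌈(φ_{A,I,I}⊗B)∘ψ_{A,I,B}⌉ = ⌈ψ_{A,I,B}∘(φ_{A,I,I}⊗B)⌉ and ⌈(A⊗φ_{I,I,B})∘ψ_{A,I,B}⌉ = ⌈ψ_{A,I,B}∘(A⊗φ_{I,I,B})⌉, as maps A⊗B → A⊗B. -/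
/-!
Padding `ψ_{A,I,B}` gives an endomorphism `⌈ψ⌉_{A,B}` of `A ⊗ B` which, by naturality of `ψ` and
of the unitors, is natural in both `A` and `B`. After padding, `φ_{A,I,I} ⊗ B` is `e ▷ B` for an
endomorphism `e` of `A`, and `A ⊗ φ_{I,I,B}` is `A ◁ e` for an endomorphism `e` of `B`, so both
commute with `⌈ψ⌉_{A,B}`. Bringing both sides into this form is pure coherence.
-/

open CategoryTheory MonoidalCategory

universe v u

namespace CategoryTheory.MonoidalCategory

variable {C : Type u} [Category.{v} C] [MonoidalCategory C]
  {ψ : ∀ A B C' : C, (A ⊗ B) ⊗ C' ⟶ A ⊗ (B ⊗ C')}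

variable (ψ) in
def paddedUnitInsertion (A B : C) : A ⊗ B ⟶ A ⊗ B :=
  (ρ_ A).inv ▷ B ≫ ψ A (𝟙_ C) B ≫ A ◁ (λ_ B).hom

section

variable (hψ : ∀ {A A' B B' C₀ C₀' : C} (f : A ⟶ A') (g : B ⟶ B') (h : C₀ ⟶ C₀'),
  ((f ⊗ₘ g) ⊗ₘ h) ≫ ψ A' B' C₀' = ψ A B C₀ ≫ (f ⊗ₘ (g ⊗ₘ h)))
include hψ

theorem tensorHom_comp_paddedUnitInsertion {A A' B B' : C} (f : A ⟶ A') (g : B ⟶ B') :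
    (f ⊗ₘ g) ≫ paddedUnitInsertion ψ A' B' = paddedUnitInsertion ψ A B ≫ (f ⊗ₘ g) :=
  calc (f ⊗ₘ g) ≫ paddedUnitInsertion ψ A' B'
      = (ρ_ A).inv ▷ B ≫ ((f ⊗ₘ 𝟙 (𝟙_ C)) ⊗ₘ g) ≫ ψ A' (𝟙_ C) B' ≫ A' ◁ (λ_ B').hom := by
        unfold paddedUnitInsertion; monoidal
    _ = (ρ_ A).inv ▷ B ≫ ψ A (𝟙_ C) B ≫ (f ⊗ₘ (𝟙 (𝟙_ C) ⊗ₘ g)) ≫ A' ◁ (λ_ B').hom := by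
        rw [reassoc_of% hψ]
    _ = paddedUnitInsertion ψ A B ≫ (f ⊗ₘ g) := by
        unfold paddedUnitInsertion; monoidal

theorem whiskerRight_comp_paddedUnitInsertion {A : C} (e : A ⟶ A) (B : C) :
    e ▷ B ≫ paddedUnitInsertion ψ A B = paddedUnitInsertion ψ A B ≫ e ▷ B := by
  simpa only [tensorHom_id] using tensorHom_comp_paddedUnitInsertion hψ e (𝟙 B)

theorem whiskerLeft_comp_paddedUnitInsertion (A : C) {B : C} (e : B ⟶ B) :
    A ◁ e ≫ paddedUnitInsertion ψ A B = paddedUnitInsertion ψ A B ≫ A ◁ e := by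
  simpa only [id_tensorHom] using tensorHom_comp_paddedUnitInsertion hψ (𝟙 A) e

end

end CategoryTheory.MonoidalCategory

theorem padded_unit_insertions_commute_general
    {C : Type u} [Category.{v} C] [MonoidalCategory C]
    (ψ φ : ∀ A B C' : C, (A ⊗ B) ⊗ C' ⟶ A ⊗ (B ⊗ C'))
    (hψ : ∀ {A A' B B' C₀ C₀' : C} (f : A ⟶ A') (g : B ⟶ B') (h : C₀ ⟶ C₀'),
      ((f ⊗ₘ g) ⊗ₘ h) ≫ ψ A' B' C₀' = ψ A B C₀ ≫ (f ⊗ₘ (g ⊗ₘ h))) :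
    (∀ A B : C,
      ((((ρ_ A).inv ≫ (ρ_ (A ⊗ 𝟙_ C)).inv) ▷ B) ≫ (φ A (𝟙_ C) (𝟙_ C) ▷ B) ≫
          ((A ◁ (λ_ (𝟙_ C)).hom) ▷ B) ≫ ψ A (𝟙_ C) B ≫ (A ◁ (λ_ B).hom)
        = ((ρ_ A).inv ▷ B) ≫ ψ A (𝟙_ C) B ≫ (α_ A (𝟙_ C) B).inv ≫
            ((ρ_ (A ⊗ 𝟙_ C)).inv ▷ B) ≫ (φ A (𝟙_ C) (𝟙_ C) ▷ B) ≫
            ((A ◁ (λ_ (𝟙_ C)).hom) ▷ B) ≫ ((ρ_ A).hom ▷ B))) ∧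
    (∀ A B : C,
      ((A ◁ ((λ_ B).inv ≫ (λ_ (𝟙_ C ⊗ B)).inv ≫ (α_ (𝟙_ C) (𝟙_ C) B).inv)) ≫
          (A ◁ (φ (𝟙_ C) (𝟙_ C) B ≫ (𝟙_ C ◁ (λ_ B).hom))) ≫ (α_ A (𝟙_ C) B).inv ≫
          ψ A (𝟙_ C) B ≫ (A ◁ (λ_ B).hom)
        = ((ρ_ A).inv ▷ B) ≫ ψ A (𝟙_ C) B ≫
            (A ◁ ((λ_ (𝟙_ C ⊗ B)).inv ≫ (α_ (𝟙_ C) (𝟙_ C) B).inv)) ≫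
            (A ◁ (φ (𝟙_ C) (𝟙_ C) B ≫ (λ_ (𝟙_ C ⊗ B)).hom)) ≫ (A ◁ (λ_ B).hom))) := by
  refine ⟨fun A B => ?_, fun A B => ?_⟩
  · let e : A ⟶ A := (ρ_ A).inv ≫ (ρ_ (A ⊗ 𝟙_ C)).inv ≫ φ A (𝟙_ C) (𝟙_ C) ≫
      A ◁ (λ_ (𝟙_ C)).hom ≫ (ρ_ A).hom
    calc _ = e ▷ B ≫ paddedUnitInsertion ψ A B := by unfold e paddedUnitInsertion; monoidal
      _ = paddedUnitInsertion ψ A B ≫ e ▷ B := whiskerRight_comp_paddedUnitInsertion hψ e B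
      _ = _ := by unfold e paddedUnitInsertion; monoidal
  · let e : B ⟶ B := (λ_ B).inv ≫ (λ_ (𝟙_ C ⊗ B)).inv ≫ (α_ (𝟙_ C) (𝟙_ C) B).inv ≫
      φ (𝟙_ C) (𝟙_ C) B ≫ (λ_ (𝟙_ C ⊗ B)).hom ≫ (λ_ B).hom
    calc _ = A ◁ e ≫ paddedUnitInsertion ψ A B := by unfold e paddedUnitInsertion; monoidal
      _ = paddedUnitInsertion ψ A B ≫ A ◁ e := whiskerLeft_comp_paddedUnitInsertion hψ A e
      _ = _ := by unfold e paddedUnitInsertion; monoidal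

theorem padded_unit_insertions_commute
    {C : Type u} [Category.{v} C] [MonoidalCategory C]
    (ψ φ : ∀ A B C' : C, (A ⊗ B) ⊗ C' ⟶ A ⊗ (B ⊗ C'))
    (hψ : ∀ {A A' B B' C₀ C₀' : C} (f : A ⟶ A') (g : B ⟶ B') (h : C₀ ⟶ C₀'),
      ((f ⊗ₘ g) ⊗ₘ h) ≫ ψ A' B' C₀' = ψ A B C₀ ≫ (f ⊗ₘ (g ⊗ₘ h)))
    (hφ : ∀ {A A' B B' C₀ C₀' : C} (f : A ⟶ A') (g : B ⟶ B') (h : C₀ ⟶ C₀'),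
      ((f ⊗ₘ g) ⊗ₘ h) ≫ φ A' B' C₀' = φ A B C₀ ≫ (f ⊗ₘ (g ⊗ₘ h))) :
    (∀ A B : C,
      ((((ρ_ A).inv ≫ (ρ_ (A ⊗ 𝟙_ C)).inv) ▷ B) ≫ (φ A (𝟙_ C) (𝟙_ C) ▷ B) ≫
          ((A ◁ (λ_ (𝟙_ C)).hom) ▷ B) ≫ ψ A (𝟙_ C) B ≫ (A ◁ (λ_ B).hom)
        = ((ρ_ A).inv ▷ B) ≫ ψ A (𝟙_ C) B ≫ (α_ A (𝟙_ C) B).inv ≫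
            ((ρ_ (A ⊗ 𝟙_ C)).inv ▷ B) ≫ (φ A (𝟙_ C) (𝟙_ C) ▷ B) ≫
            ((A ◁ (λ_ (𝟙_ C)).hom) ▷ B) ≫ ((ρ_ A).hom ▷ B))) ∧
    (∀ A B : C,
      ((A ◁ ((λ_ B).inv ≫ (λ_ (𝟙_ C ⊗ B)).inv ≫ (α_ (𝟙_ C) (𝟙_ C) B).inv)) ≫
          (A ◁ (φ (𝟙_ C) (𝟙_ C) B ≫ (𝟙_ C ◁ (λ_ B).hom))) ≫ (α_ A (𝟙_ C) B).inv ≫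
          ψ A (𝟙_ C) B ≫ (A ◁ (λ_ B).hom)
        = ((ρ_ A).inv ▷ B) ≫ ψ A (𝟙_ C) B ≫
            (A ◁ ((λ_ (𝟙_ C ⊗ B)).inv ≫ (α_ (𝟙_ C) (𝟙_ C) B).inv)) ≫
            (A ◁ (φ (𝟙_ C) (𝟙_ C) B ≫ (λ_ (𝟙_ C ⊗ B)).hom)) ≫ (A ◁ (λ_ B).hom))) :=
  padded_unit_insertions_commute_general ψ φ hψ
end
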